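/- If f : [0,∞) → ℝ satisfies the Lipschitz condition |f(x)−f(y)| ≤ M|x−y|^α for some M > 0 and 0 < α ≤ 1, then |D_n*(f; x) − f(x)| ≤ M (Ω_n²(x))^{α/2} for every x ≥ 0 and n ≥ 1. -/

import Mathlib

open scoped BigOperators
open MeasureTheory Filter

/-- Parity indicator: 0 for even, 1 for odd. -/
def theta (j : ℕ) : ℝ := if j % 2 = 1 then 1 else 0

/-- Dunkl coefficients via the recursion. -/
noncomputable def gamRec (μ : ℝ) : ℕ → ℝ
  | 0 => 1
  | k + 1 => ((k : ℝ) + 1 + 2 * μ * theta (k + 1)) * gamRec μ k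

/-- Dunkl exponential. -/
noncomputable def emu (μ : ℝ) (x : ℝ) : ℝ := ∑' k : ℕ, x ^ k / gamRec μ k

/-- Dunkl-Appell polynomials. -/
noncomputable def pk (μ : ℝ) (a : ℕ → ℝ) (k : ℕ) (x : ℝ) : ℝ :=
  ∑ j ∈ Finset.range (k + 1),
    (gamRec μ k / (gamRec μ j * gamRec μ (k - j))) * a (k - j) * x ^ j

/-- The analytic function A. -/
noncomputable def Afun (μ : ℝ) (a : ℕ → ℝ) (t : ℝ) : ℝ := ∑' r : ℕ, a r * t ^ r / gamRec μ r

/-- Dunkl-Appell Gamma-type (Szász–Durrmeyer) operator. -/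
noncomputable def Dop (μ lam : ℝ) (a : ℕ → ℝ) (n : ℕ) (f : ℝ → ℝ) (x : ℝ) : ℝ :=
  (1 / (emu μ (n * x) * Afun μ a 1)) *
    ∑' k : ℕ, (pk μ a k (n * x) / gamRec μ k) *
      ((n : ℝ) ^ ((k : ℝ) + 2 * μ * theta k + lam + 1) /
        Real.Gamma ((k : ℝ) + 2 * μ * theta k + lam + 1)) *
      ∫ t in Set.Ioi (0 : ℝ), Real.exp (-(n : ℝ) * t) * t ^ ((k : ℝ) + 2 * μ * theta k + lam) * f t

/-- Analyticity (radius of convergence > 1) hypothesis for A. -/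
def AnalyticHyp (μ : ℝ) (a : ℕ → ℝ) : Prop :=
  ∃ R > (1 : ℝ), ∀ t : ℝ, |t| < R → Summable (fun r : ℕ => a r * t ^ r / gamRec μ r)

/-- Modulus of continuity on [0,∞). -/
noncomputable def modCont (f : ℝ → ℝ) (δ : ℝ) : ℝ :=
  sSup {d : ℝ | ∃ x y : ℝ, 0 ≤ x ∧ 0 ≤ y ∧ |x - y| ≤ δ ∧ d = |f x - f y|}

/-- sup norm on [0,∞). -/
noncomputable def CBnorm (g : ℝ → ℝ) : ℝ := sSup ((fun x => |g x|) '' Set.Ici 0)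

/-- Dunkl coefficients via the Gamma-function formulas of the paper. -/
noncomputable def gamG (μ : ℝ) (m : ℕ) : ℝ :=
  if m % 2 = 0 then
    2 ^ m * (Nat.factorial (m / 2)) * Real.Gamma ((m / 2 : ℕ) + μ + 1 / 2) / Real.Gamma (μ + 1 / 2)
  else
    2 ^ m * (Nat.factorial ((m - 1) / 2)) * Real.Gamma (((m - 1) / 2 : ℕ) + μ + 3 / 2) / Real.Gamma (μ + 1 / 2)

/-! `D_n*(·; x)` is integration against the probability measure `ν = ∑ₖ wₖ · Gamma(σₖ + 1, n)`,
`σₖ = k + 2μ θ(k) + λ`, a mixture of Gamma distributions whose weights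
`wₖ = pₖ(nx) / (γ(k) e_μ(nx) A(1))` are the Cauchy product of the probability sequences
`(nx)ʲ / (γ(j) e_μ(nx))` and `aₘ / (γ(m) A(1))`. Since `A` converges beyond `1`, these weights
have a geometric moment, so `ν` has a finite second moment. Then
`|∫ f dν - f x| ≤ M ∫ |t - x|^α dν ≤ M (∫ (t - x)² dν)^(α/2)`, the last step being Jensen's
inequality for the concave map `r ↦ r^(α/2)`. -/

open MeasureTheory ProbabilityTheory Set Real

section HolderEstimate

variable {ν : Measure ℝ} {f : ℝ → ℝ} {M α x : ℝ}

lemma continuousOn_Ici_of_holder (hα0 : 0 < α)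
    (hf : ∀ s t : ℝ, 0 ≤ s → 0 ≤ t → |f s - f t| ≤ M * |s - t| ^ α) :
    ContinuousOn f (Ici 0) := by
  intro t ht
  have hlim : Filter.Tendsto (fun s => M * |s - t| ^ α) (nhds t) (nhds 0) := by
    refine (continuous_const.mul ((continuous_id.sub continuous_const).abs.rpow_const
      fun _ => Or.inr hα0.le)).tendsto' t 0 ?_
    simp [zero_rpow hα0.ne']
  refine tendsto_iff_dist_tendsto_zero.mpr
    (squeeze_zero' (Filter.Eventually.of_forall fun _ => dist_nonneg) ?_
      (hlim.mono_left nhdsWithin_le_nhds))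
  filter_upwards [self_mem_nhdsWithin] with s hs
  exact (dist_eq_norm _ _).trans_le (hf s t hs ht)

lemma rpow_abs_le_one_add_sq (hα0 : 0 ≤ α) (hα2 : α ≤ 2) (u : ℝ) : |u| ^ α ≤ 1 + u ^ 2 := by
  rcases le_or_gt |u| 1 with hu | hu
  · linarith [rpow_le_one (abs_nonneg u) hu hα0, sq_nonneg u]
  · have := rpow_le_rpow_of_exponent_le hu.le hα2
    rw [show (2 : ℝ) = (2 : ℕ) by norm_num, rpow_natCast, sq_abs] at this
    linarith

lemma sq_rpow_half (u α : ℝ) : (u ^ 2) ^ (α / 2) = |u| ^ α := by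
  rw [← sq_abs, ← rpow_natCast, ← rpow_mul (abs_nonneg u)]
  congr 1
  ring

lemma integrable_rpow_abs_sub [IsFiniteMeasure ν] (hsq : Integrable (fun t => (t - x) ^ 2) ν)
    (hα0 : 0 ≤ α) (hα2 : α ≤ 2) : Integrable (fun t => |t - x| ^ α) ν :=
  ((integrable_const 1).add hsq).mono' (by fun_prop : Measurable _).aestronglyMeasurable
    (ae_of_all _ fun t => by
      rw [norm_of_nonneg (by positivity)]
      exact rpow_abs_le_one_add_sq hα0 hα2 _)

lemma integrable_of_holder [IsFiniteMeasure ν] (hν0 : ∀ᵐ t ∂ν, 0 ≤ t)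
    (hsq : Integrable (fun t => (t - x) ^ 2) ν) (hα0 : 0 < α) (hα2 : α ≤ 2)
    (hf : ∀ s t : ℝ, 0 ≤ s → 0 ≤ t → |f s - f t| ≤ M * |s - t| ^ α) (hx : 0 ≤ x) :
    Integrable f ν := by
  have hmeas : AEStronglyMeasurable f ν := by
    have := (continuousOn_Ici_of_holder hα0 hf).aestronglyMeasurable measurableSet_Ici (μ := ν)
    rwa [Measure.restrict_eq_self_of_ae_mem (s := Ici 0) hν0] at this
  refine ((integrable_const |f x|).add
    ((integrable_rpow_abs_sub hsq hα0.le hα2).const_mul M)).mono' hmeas ?_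
  filter_upwards [hν0] with t ht
  have := hf t x ht hx
  rw [norm_eq_abs, Pi.add_apply]
  linarith [abs_sub_abs_le_abs_sub (f t) (f x)]

theorem abs_integral_sub_le_of_holder [IsProbabilityMeasure ν] (hν0 : ∀ᵐ t ∂ν, 0 ≤ t)
    (hsq : Integrable (fun t => (t - x) ^ 2) ν) (hM : 0 ≤ M) (hα0 : 0 < α) (hα2 : α ≤ 2)
    (hf : ∀ s t : ℝ, 0 ≤ s → 0 ≤ t → |f s - f t| ≤ M * |s - t| ^ α) (hx : 0 ≤ x) :
    |∫ t, f t ∂ν - f x| ≤ M * (∫ t, (t - x) ^ 2 ∂ν) ^ (α / 2) := by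
  have hfi := integrable_of_holder hν0 hsq hα0 hα2 hf hx
  have hαi := integrable_rpow_abs_sub hsq hα0.le hα2
  have jensen : ∫ t, |t - x| ^ α ∂ν ≤ (∫ t, (t - x) ^ 2 ∂ν) ^ (α / 2) := by
    simp only [← sq_rpow_half]
    refine (concaveOn_rpow (by positivity) (by linarith)).le_map_integral
      (continuousOn_id.rpow_const fun _ _ => Or.inr (by positivity)) isClosed_Ici
      (ae_of_all _ fun t => sq_nonneg (t - x)) hsq ?_
    simpa only [Function.comp_def, sq_rpow_half] using hαi
  calc |∫ t, f t ∂ν - f x| = |∫ t, (f t - f x) ∂ν| := by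
        rw [integral_sub hfi (integrable_const _), integral_const, probReal_univ, one_smul]
    _ ≤ ∫ t, |f t - f x| ∂ν := abs_integral_le_integral_abs
    _ ≤ ∫ t, M * |t - x| ^ α ∂ν := by
        refine integral_mono_ae (hfi.sub (integrable_const _)).abs (hαi.const_mul M) ?_
        filter_upwards [hν0] with t ht
        exact hf t x ht hx
    _ ≤ M * (∫ t, (t - x) ^ 2 ∂ν) ^ (α / 2) := by
        rw [integral_const_mul]
        exact mul_le_mul_of_nonneg_left jensen hM

end HolderEstimate

section Mixture

variable {X : Type*} [MeasurableSpace X] {w : ℕ → ℝ} {ρ : ℕ → Measure X}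

noncomputable def mixture (w : ℕ → ℝ) (ρ : ℕ → Measure X) : Measure X :=
  Measure.sum fun k => ENNReal.ofReal (w k) • ρ k

lemma isProbabilityMeasure_mixture (hw0 : ∀ k, 0 ≤ w k) (hw : HasSum w 1)
    [∀ k, IsProbabilityMeasure (ρ k)] : IsProbabilityMeasure (mixture w ρ) := by
  constructor
  simp only [mixture, Measure.sum_apply _ MeasurableSet.univ, Measure.smul_apply, measure_univ,
    smul_eq_mul, mul_one]
  rw [← ENNReal.ofReal_tsum_of_nonneg hw0 hw.summable, hw.tsum_eq, ENNReal.ofReal_one]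

lemma ae_mixture {p : X → Prop} (h : ∀ k, ∀ᵐ t ∂ρ k, p t) : ∀ᵐ t ∂mixture w ρ, p t :=
  Measure.ae_sum_iff.mpr fun k => Measure.ae_smul_measure (h k) _

lemma integrable_mixture (hw0 : ∀ k, 0 ≤ w k) {φ : X → ℝ} (hφ : ∀ k, Integrable φ (ρ k))
    (hs : Summable fun k => w k * ∫ t, ‖φ t‖ ∂ρ k) : Integrable φ (mixture w ρ) := by
  refine integrable_sum_measure (fun k => (hφ k).smul_measure ENNReal.ofReal_ne_top) ?_
  simpa only [integral_smul_measure, ENNReal.toReal_ofReal (hw0 _), smul_eq_mul] using hs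

lemma integral_mixture (hw0 : ∀ k, 0 ≤ w k) {φ : X → ℝ} (hφ : Integrable φ (mixture w ρ)) :
    ∫ t, φ t ∂mixture w ρ = ∑' k, w k * ∫ t, φ t ∂ρ k := by
  simp only [mixture, integral_sum_measure hφ, integral_smul_measure,
    ENNReal.toReal_ofReal (hw0 _), smul_eq_mul]

end Mixture

section GammaDistribution

variable {σ r : ℝ}

lemma gammaMeasure_add_one_eq (r σ : ℝ) :
    gammaMeasure (σ + 1) r = (volume.restrict (Ioi 0)).withDensity fun t =>
      ENNReal.ofReal (r ^ (σ + 1) / Gamma (σ + 1) * (exp (-r * t) * t ^ σ)) := by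
  have hpdf : gammaPDF (σ + 1) r = (Ici 0).indicator fun t =>
      ENNReal.ofReal (r ^ (σ + 1) / Gamma (σ + 1) * (exp (-r * t) * t ^ σ)) := by
    ext t
    by_cases ht : 0 ≤ t
    · rw [indicator_of_mem (mem_Ici.mpr ht), gammaPDF_of_nonneg ht, add_sub_cancel_right, neg_mul]
      ring_nf
    · rw [indicator_of_notMem (fun h => ht (mem_Ici.mp h)), gammaPDF_of_neg (not_le.mp ht)]
  rw [gammaMeasure, hpdf, withDensity_indicator measurableSet_Ici,
    Measure.restrict_congr_set Ioi_ae_eq_Ici]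

lemma ae_pos_gammaMeasure (a r : ℝ) : ∀ᵐ t ∂gammaMeasure a r, 0 < t := by
  rw [← sub_add_cancel a 1, gammaMeasure_add_one_eq]
  exact (withDensity_absolutelyContinuous _ _).ae_le (ae_restrict_mem measurableSet_Ioi)

lemma gammaMeasure_add_one_toReal_smul_eqOn (hσ : -1 < σ) (hr : 0 ≤ r) (φ : ℝ → ℝ) :
    EqOn (fun t => (ENNReal.ofReal (r ^ (σ + 1) / Gamma (σ + 1) * (exp (-r * t) * t ^ σ))).toReal
        • φ t)
      (fun t => r ^ (σ + 1) / Gamma (σ + 1) * (exp (-r * t) * t ^ σ * φ t)) (Ioi 0) := by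
  intro t (ht : 0 < t)
  have := Gamma_pos_of_pos (neg_lt_iff_pos_add.mp hσ)
  dsimp only
  rw [ENNReal.toReal_ofReal (by positivity), smul_eq_mul, mul_assoc]

lemma integral_gammaMeasure_add_one (hσ : -1 < σ) (hr : 0 ≤ r) (φ : ℝ → ℝ) :
    ∫ t, φ t ∂gammaMeasure (σ + 1) r =
      r ^ (σ + 1) / Gamma (σ + 1) * ∫ t in Ioi 0, exp (-r * t) * t ^ σ * φ t := by
  rw [gammaMeasure_add_one_eq, integral_withDensity_eq_integral_toReal_smul (by fun_prop)
    (ae_of_all _ fun _ => ENNReal.ofReal_lt_top), ← integral_const_mul]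
  exact setIntegral_congr_fun measurableSet_Ioi (gammaMeasure_add_one_toReal_smul_eqOn hσ hr φ)

lemma integrable_gammaMeasure_add_one_iff (hσ : -1 < σ) (hr : 0 < r) {φ : ℝ → ℝ} :
    Integrable φ (gammaMeasure (σ + 1) r) ↔
      IntegrableOn (fun t => exp (-r * t) * t ^ σ * φ t) (Ioi 0) := by
  have := Gamma_pos_of_pos (neg_lt_iff_pos_add.mp hσ)
  rw [gammaMeasure_add_one_eq, integrable_withDensity_iff_integrable_smul' (by fun_prop)
    (ae_of_all _ fun _ => ENNReal.ofReal_lt_top), IntegrableOn, integrable_congr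
    ((ae_restrict_iff' measurableSet_Ioi).mpr
      (ae_of_all _ (gammaMeasure_add_one_toReal_smul_eqOn hσ hr.le φ)))]
  exact integrable_const_mul_iff (IsUnit.mk0 _ (by positivity)) _

lemma integrable_pow_gammaMeasure (hσ : -1 < σ) (hr : 0 < r) (j : ℕ) :
    Integrable (fun t => t ^ j) (gammaMeasure (σ + 1) r) := by
  rw [integrable_gammaMeasure_add_one_iff hσ hr]
  have := integrableOn_rpow_mul_exp_neg_mul_rpow (p := 1) (b := r) (s := σ + j)
    (by linarith [(j.cast_nonneg : (0 : ℝ) ≤ j)]) one_pos hr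
  refine this.congr_fun (fun t (ht : 0 < t) => ?_) measurableSet_Ioi
  simp only [rpow_one, rpow_add ht, rpow_natCast]
  ring

lemma integral_pow_gammaMeasure (hσ : -1 < σ) (hr : 0 < r) (j : ℕ) :
    ∫ t, t ^ j ∂gammaMeasure (σ + 1) r = Gamma (σ + 1 + j) / (Gamma (σ + 1) * r ^ j) := by
  have hσj : 0 < σ + j + 1 := by linarith [(j.cast_nonneg : (0 : ℝ) ≤ j)]
  have hI : ∫ t in Ioi 0, exp (-r * t) * t ^ σ * t ^ j =
      (1 / r) ^ (σ + j + 1) * Gamma (σ + j + 1) := by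
    rw [← integral_rpow_mul_exp_neg_mul_Ioi hσj hr]
    refine setIntegral_congr_fun measurableSet_Ioi fun t (ht : 0 < t) => ?_
    simp only [add_sub_cancel_right, rpow_add ht, rpow_natCast]
    ring_nf
  have := Gamma_pos_of_pos (neg_lt_iff_pos_add.mp hσ)
  rw [integral_gammaMeasure_add_one hσ hr.le, hI, one_div, inv_rpow hr.le,
    show σ + j + 1 = σ + 1 + j by ring, rpow_add hr (σ + 1), rpow_natCast]
  field_simp

lemma sub_sq_eq_pow_combination (x : ℝ) :
    (fun t : ℝ => (t - x) ^ 2) = fun t => t ^ 2 - 2 * x * t ^ 1 + x ^ 2 := by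
  ext t; ring

lemma integrable_sub_sq_gammaMeasure (hσ : -1 < σ) (hr : 0 < r) (x : ℝ) :
    Integrable (fun t => (t - x) ^ 2) (gammaMeasure (σ + 1) r) := by
  have := isProbabilityMeasure_gammaMeasure (neg_lt_iff_pos_add.mp hσ) hr
  rw [sub_sq_eq_pow_combination]
  exact ((integrable_pow_gammaMeasure hσ hr 2).sub
    ((integrable_pow_gammaMeasure hσ hr 1).const_mul _)).add (integrable_const _)

lemma integral_sub_sq_gammaMeasure (hσ : -1 < σ) (hr : 0 < r) (x : ℝ) :
    ∫ t, (t - x) ^ 2 ∂gammaMeasure (σ + 1) r =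
      (σ + 1) * (σ + 2) / r ^ 2 - 2 * x * (σ + 1) / r + x ^ 2 := by
  have hσ1 : 0 < σ + 1 := neg_lt_iff_pos_add.mp hσ
  have := isProbabilityMeasure_gammaMeasure hσ1 hr
  have h1 := integrable_pow_gammaMeasure hσ hr 1
  have h2 := integrable_pow_gammaMeasure hσ hr 2
  have h3 : Integrable (fun t => t ^ 2 - 2 * x * t ^ 1) (gammaMeasure (σ + 1) r) :=
    h2.sub (h1.const_mul _)
  rw [sub_sq_eq_pow_combination, integral_add h3 (integrable_const _),
    integral_sub h2 (h1.const_mul _), integral_const_mul, integral_pow_gammaMeasure hσ hr,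
    integral_pow_gammaMeasure hσ hr, integral_const, probReal_univ, one_smul]
  have hΓ1 : Gamma (σ + 1 + 1) = (σ + 1) * Gamma (σ + 1) := Gamma_add_one hσ1.ne'
  have hΓ2 : Gamma (σ + 1 + 2) = (σ + 2) * ((σ + 1) * Gamma (σ + 1)) := by
    rw [show σ + 1 + 2 = σ + 2 + 1 by ring, Gamma_add_one (by linarith),
      show σ + 2 = σ + 1 + 1 by ring, hΓ1]
  have := Gamma_pos_of_pos hσ1
  push_cast
  rw [hΓ1, hΓ2]
  field_simp

lemma integral_sub_sq_gammaMeasure_le (hσ : -1 < σ) (hr : 1 ≤ r) (x : ℝ) :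
    ∫ t, (t - x) ^ 2 ∂gammaMeasure (σ + 1) r ≤ (σ + 2 + |x|) ^ 2 := by
  have hr0 : 0 < r := by linarith
  rw [integral_sub_sq_gammaMeasure hσ hr0]
  have h1 : (σ + 1) * (σ + 2) / r ^ 2 ≤ (σ + 1) * (σ + 2) :=
    div_le_self (by nlinarith) (one_le_pow₀ hr)
  have h2 : -(2 * |x| * (σ + 1)) ≤ 2 * x * (σ + 1) / r := by
    rw [le_div_iff₀ hr0]
    nlinarith [neg_abs_le x, mul_nonneg (abs_nonneg x) (by linarith : (0 : ℝ) ≤ σ + 1)]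
  nlinarith [sq_abs x, abs_nonneg x]

end GammaDistribution

section Convolution

open Finset

variable {p q : ℕ → ℝ}

lemma hasSum_sum_range_mul_of_nonneg (hp0 : ∀ j, 0 ≤ p j) (hq0 : ∀ j, 0 ≤ q j) {s s' : ℝ}
    (hp : HasSum p s) (hq : HasSum q s') :
    HasSum (fun k => ∑ j ∈ range (k + 1), p j * q (k - j)) (s * s') := by
  have hpn : Summable fun j => ‖p j‖ := by simpa only [norm_of_nonneg (hp0 _)] using hp.summable
  have hqn : Summable fun j => ‖q j‖ := by simpa only [norm_of_nonneg (hq0 _)] using hq.summable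
  simpa only [hp.tsum_eq, hq.tsum_eq] using hasSum_sum_range_mul_of_summable_norm hpn hqn

lemma summable_sum_range_mul_mul_pow (hp0 : ∀ j, 0 ≤ p j) (hq0 : ∀ j, 0 ≤ q j) {t : ℝ}
    (ht : 0 ≤ t) (hp : Summable fun j => p j * t ^ j) (hq : Summable fun j => q j * t ^ j) :
    Summable fun k => (∑ j ∈ range (k + 1), p j * q (k - j)) * t ^ k := by
  refine (hasSum_sum_range_mul_of_nonneg (fun j => mul_nonneg (hp0 j) (pow_nonneg ht j))
    (fun j => mul_nonneg (hq0 j) (pow_nonneg ht j)) hp.hasSum hq.hasSum).summable.congr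
    fun k => ?_
  rw [sum_mul]
  refine sum_congr rfl fun j hj => ?_
  rw [← pow_mul_pow_sub t (Nat.lt_succ_iff.mp (mem_range.mp hj))]
  ring

lemma summable_mul_pow_of_summable_mul_geometric {w : ℕ → ℝ} (hw0 : ∀ k, 0 ≤ w k) {t : ℝ}
    (ht : 1 < t) (hw : Summable fun k => w k * t ^ k) (j : ℕ) :
    Summable fun k => w k * (k : ℝ) ^ j := by
  refine hw.of_norm_bounded_eventually_nat ?_
  filter_upwards [(tendsto_pow_const_div_const_pow_of_one_lt j ht).eventually
    (ge_mem_nhds one_pos)] with k hk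
  rw [norm_of_nonneg (mul_nonneg (hw0 k) (by positivity))]
  exact mul_le_mul_of_nonneg_left ((div_le_one (by positivity)).mp hk) (hw0 k)

end Convolution

section DunklAppell

open Finset

variable {μ lam : ℝ} {a : ℕ → ℝ}

lemma theta_nonneg (j : ℕ) : 0 ≤ theta j := by unfold theta; split <;> norm_num

lemma theta_le_one (j : ℕ) : theta j ≤ 1 := by unfold theta; split <;> norm_num

lemma gamRec_pos (hμ : 0 ≤ μ) : ∀ k, 0 < gamRec μ k
  | 0 => one_pos
  | k + 1 => mul_pos (by have := theta_nonneg (k + 1); positivity) (gamRec_pos hμ k)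

lemma factorial_le_gamRec (hμ : 0 ≤ μ) : ∀ k, (k.factorial : ℝ) ≤ gamRec μ k
  | 0 => by simp [gamRec]
  | k + 1 => by
    rw [Nat.factorial_succ, Nat.cast_mul, gamRec]
    push_cast
    have := theta_nonneg (k + 1)
    exact mul_le_mul (by nlinarith) (factorial_le_gamRec hμ k) (by positivity) (by positivity)

lemma hasSum_emu (hμ : 0 ≤ μ) (y : ℝ) : HasSum (fun k => y ^ k / gamRec μ k) (emu μ y) := by
  refine (Summable.of_norm_bounded (Real.summable_pow_div_factorial |y|) fun k => ?_).hasSum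
  rw [norm_div, norm_pow, norm_of_nonneg (gamRec_pos hμ k).le, Real.norm_eq_abs]
  exact div_le_div_of_nonneg_left (by positivity) (by positivity) (factorial_le_gamRec hμ k)

lemma one_le_emu (hμ : 0 ≤ μ) {y : ℝ} (hy : 0 ≤ y) : 1 ≤ emu μ y := by
  simpa [gamRec, emu] using (hasSum_emu hμ y).summable.le_tsum 0
    fun j _ => div_nonneg (pow_nonneg hy j) (gamRec_pos hμ j).le

noncomputable def dunklAppellWeight (μ : ℝ) (a : ℕ → ℝ) (y : ℝ) (k : ℕ) : ℝ :=
  pk μ a k y / gamRec μ k / (emu μ y * Afun μ a 1)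

lemma dunklAppellWeight_eq_sum_range (hμ : 0 ≤ μ) (y : ℝ) (k : ℕ) :
    dunklAppellWeight μ a y k = ∑ j ∈ range (k + 1),
      y ^ j / gamRec μ j / emu μ y * (a (k - j) / gamRec μ (k - j) / Afun μ a 1) := by
  rw [dunklAppellWeight, pk, sum_div, sum_div]
  refine sum_congr rfl fun j _ => ?_
  have := (gamRec_pos hμ k).ne'
  field_simp

lemma pow_div_gamRec_div_emu_nonneg (hμ : 0 ≤ μ) {y : ℝ} (hy : 0 ≤ y) (j : ℕ) :
    0 ≤ y ^ j / gamRec μ j / emu μ y :=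
  div_nonneg (div_nonneg (pow_nonneg hy j) (gamRec_pos hμ j).le)
    (zero_le_one.trans (one_le_emu hμ hy))

lemma div_gamRec_div_Afun_nonneg (hμ : 0 ≤ μ) (hpos : ∀ r, 0 ≤ a r / Afun μ a 1) (m : ℕ) :
    0 ≤ a m / gamRec μ m / Afun μ a 1 := by
  rw [div_right_comm]
  exact div_nonneg (hpos m) (gamRec_pos hμ m).le

lemma dunklAppellWeight_nonneg (hμ : 0 ≤ μ) (hpos : ∀ r, 0 ≤ a r / Afun μ a 1) {y : ℝ}
    (hy : 0 ≤ y) (k : ℕ) : 0 ≤ dunklAppellWeight μ a y k := by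
  rw [dunklAppellWeight_eq_sum_range hμ]
  exact sum_nonneg fun j _ => mul_nonneg (pow_div_gamRec_div_emu_nonneg hμ hy j)
    (div_gamRec_div_Afun_nonneg hμ hpos _)

lemma hasSum_dunklAppellWeight (hμ : 0 ≤ μ) (hA : AnalyticHyp μ a) (hA1 : Afun μ a 1 ≠ 0)
    (hpos : ∀ r, 0 ≤ a r / Afun μ a 1) {y : ℝ} (hy : 0 ≤ y) :
    HasSum (dunklAppellWeight μ a y) 1 := by
  obtain ⟨R, hR1, hR⟩ := hA
  have hE : emu μ y ≠ 0 := (zero_lt_one.trans_le (one_le_emu hμ hy)).ne'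
  have hp : HasSum (fun j => y ^ j / gamRec μ j / emu μ y) 1 := by
    simpa only [div_self hE] using (hasSum_emu hμ y).div_const (emu μ y)
  have hq : HasSum (fun m => a m / gamRec μ m / Afun μ a 1) 1 := by
    have hA1sum : HasSum (fun m => a m / gamRec μ m) (Afun μ a 1) := by
      simpa [Afun] using (hR 1 (by rwa [abs_one])).hasSum
    simpa only [div_self hA1] using hA1sum.div_const (Afun μ a 1)
  have := hasSum_sum_range_mul_of_nonneg (pow_div_gamRec_div_emu_nonneg hμ hy)
    (div_gamRec_div_Afun_nonneg hμ hpos) hp hq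
  rwa [one_mul, ← funext (dunklAppellWeight_eq_sum_range hμ y)] at this

lemma summable_dunklAppellWeight_mul_pow (hμ : 0 ≤ μ) (hA : AnalyticHyp μ a)
    (hpos : ∀ r, 0 ≤ a r / Afun μ a 1) {y : ℝ} (hy : 0 ≤ y) (j : ℕ) :
    Summable fun k => dunklAppellWeight μ a y k * (k : ℝ) ^ j := by
  obtain ⟨R, hR1, hR⟩ := hA
  obtain ⟨t, ht1, htR⟩ := exists_between hR1
  refine summable_mul_pow_of_summable_mul_geometric (dunklAppellWeight_nonneg hμ hpos hy) ht1
    ?_ j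
  simp only [dunklAppellWeight_eq_sum_range hμ]
  refine summable_sum_range_mul_mul_pow (pow_div_gamRec_div_emu_nonneg hμ hy)
    (div_gamRec_div_Afun_nonneg hμ hpos) (by linarith) ?_ ?_
  · refine ((hasSum_emu hμ (y * t)).summable.div_const (emu μ y)).congr fun j => ?_
    rw [mul_pow]
    ring
  · refine ((hR t (by rwa [abs_of_pos (by linarith)])).div_const (Afun μ a 1)).congr fun m => ?_
    ring

end DunklAppell

section DunklAppellMeasure

variable {μ lam : ℝ} {a : ℕ → ℝ} {n : ℕ} {x : ℝ}

def dunklExponent (μ lam : ℝ) (k : ℕ) : ℝ := k + 2 * μ * theta k + lam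

lemma neg_one_lt_dunklExponent (hμ : 0 ≤ μ) (hlam : 0 ≤ lam) (k : ℕ) :
    -1 < dunklExponent μ lam k := by
  have := mul_nonneg (mul_nonneg zero_le_two hμ) (theta_nonneg k)
  unfold dunklExponent
  linarith [(k.cast_nonneg : (0 : ℝ) ≤ k)]

lemma dunklExponent_le (hμ : 0 ≤ μ) (k : ℕ) : dunklExponent μ lam k ≤ k + (2 * μ + lam) := by
  unfold dunklExponent
  nlinarith [theta_le_one k]

noncomputable def dunklAppellMeasure (μ lam : ℝ) (a : ℕ → ℝ) (n : ℕ) (x : ℝ) : Measure ℝ :=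
  mixture (dunklAppellWeight μ a (n * x)) fun k => gammaMeasure (dunklExponent μ lam k + 1) n

lemma Dop_eq_tsum_integral_gammaMeasure (hμ : 0 ≤ μ) (hlam : 0 ≤ lam) (φ : ℝ → ℝ) (x : ℝ) :
    Dop μ lam a n φ x = ∑' k, dunklAppellWeight μ a (n * x) k *
      ∫ t, φ t ∂gammaMeasure (dunklExponent μ lam k + 1) n := by
  rw [Dop, ← tsum_mul_left]
  refine tsum_congr fun k => ?_
  rw [integral_gammaMeasure_add_one (neg_one_lt_dunklExponent hμ hlam k)
    n.cast_nonneg, dunklAppellWeight, dunklExponent]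
  ring

lemma Dop_eq_integral (hμ : 0 ≤ μ) (hlam : 0 ≤ lam) (hpos : ∀ r, 0 ≤ a r / Afun μ a 1)
    (hx : 0 ≤ x) {φ : ℝ → ℝ} (hφ : Integrable φ (dunklAppellMeasure μ lam a n x)) :
    Dop μ lam a n φ x = ∫ t, φ t ∂dunklAppellMeasure μ lam a n x := by
  rw [Dop_eq_tsum_integral_gammaMeasure hμ hlam, dunklAppellMeasure,
    integral_mixture (dunklAppellWeight_nonneg hμ hpos (by positivity)) hφ]

lemma isProbabilityMeasure_dunklAppellMeasure (hμ : 0 ≤ μ) (hlam : 0 ≤ lam)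
    (hA : AnalyticHyp μ a) (hA1 : Afun μ a 1 ≠ 0) (hpos : ∀ r, 0 ≤ a r / Afun μ a 1)
    (hn : 0 < n) (hx : 0 ≤ x) : IsProbabilityMeasure (dunklAppellMeasure μ lam a n x) := by
  have := fun k => isProbabilityMeasure_gammaMeasure
    (neg_lt_iff_pos_add.mp (neg_one_lt_dunklExponent hμ hlam k))
    (Nat.cast_pos.mpr hn : (0 : ℝ) < n)
  exact isProbabilityMeasure_mixture (dunklAppellWeight_nonneg hμ hpos (by positivity))
    (hasSum_dunklAppellWeight hμ hA hA1 hpos (by positivity))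

lemma ae_pos_dunklAppellMeasure : ∀ᵐ t ∂dunklAppellMeasure μ lam a n x, 0 < t :=
  ae_mixture fun _ => ae_pos_gammaMeasure _ _

lemma integrable_sub_sq_dunklAppellMeasure (hμ : 0 ≤ μ) (hlam : 0 ≤ lam) (hA : AnalyticHyp μ a)
    (hpos : ∀ r, 0 ≤ a r / Afun μ a 1) (hn : 0 < n) (hx : 0 ≤ x) :
    Integrable (fun t => (t - x) ^ 2) (dunklAppellMeasure μ lam a n x) := by
  have hy : 0 ≤ (n : ℝ) * x := by positivity
  have hW0 := dunklAppellWeight_nonneg hμ hpos hy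
  set C := 2 * μ + lam + 2 + |x|
  have hmaj : Summable fun k => dunklAppellWeight μ a (n * x) k * ((k : ℝ) + C) ^ 2 := by
    have h := summable_dunklAppellWeight_mul_pow hμ hA hpos hy
    refine (((h 2).add ((h 1).mul_left (2 * C))).add ((h 0).mul_left (C ^ 2))).congr fun k => ?_
    ring
  refine integrable_mixture hW0 (fun k => integrable_sub_sq_gammaMeasure
    (neg_one_lt_dunklExponent hμ hlam k) (Nat.cast_pos.mpr hn) x)
    (hmaj.of_nonneg_of_le (fun k => mul_nonneg (hW0 k) (integral_nonneg fun _ => norm_nonneg _))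
      fun k => mul_le_mul_of_nonneg_left ?_ (hW0 k))
  simp only [norm_pow, Real.norm_eq_abs, sq_abs]
  calc ∫ t, (t - x) ^ 2 ∂gammaMeasure (dunklExponent μ lam k + 1) n
      ≤ (dunklExponent μ lam k + 2 + |x|) ^ 2 := integral_sub_sq_gammaMeasure_le
        (neg_one_lt_dunklExponent hμ hlam k) (Nat.one_le_cast.mpr hn) x
    _ ≤ ((k : ℝ) + C) ^ 2 := by
        have := dunklExponent_le (lam := lam) hμ k
        have := neg_one_lt_dunklExponent hμ hlam k
        exact pow_le_pow_left₀ (by linarith [abs_nonneg x]) (by linarith) 2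

end DunklAppellMeasure

theorem Dop_lipschitz_estimate_general (μ lam : ℝ) (hμ : 0 ≤ μ) (hlam : 0 ≤ lam)
    (a : ℕ → ℝ) (hA : AnalyticHyp μ a) (hA1 : Afun μ a 1 ≠ 0)
    (hpos : ∀ r : ℕ, 0 ≤ a r / Afun μ a 1)
    (f : ℝ → ℝ) (M α : ℝ) (hM : 0 < M) (hα0 : 0 < α) (hα1 : α ≤ 1)
    (hf : ∀ x y : ℝ, 0 ≤ x → 0 ≤ y → |f x - f y| ≤ M * |x - y| ^ α)
    (n : ℕ) (hn : 1 ≤ n) (x : ℝ) (hx : 0 ≤ x) :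
    |Dop μ lam a n f x - f x| ≤
      M * (Dop μ lam a n (fun t => (t - x) ^ 2) x) ^ (α / 2) := by
  have hα2 : α ≤ 2 := by linarith
  have : IsProbabilityMeasure (dunklAppellMeasure μ lam a n x) :=
    isProbabilityMeasure_dunklAppellMeasure hμ hlam hA hA1 hpos hn hx
  have hν0 : ∀ᵐ t ∂dunklAppellMeasure μ lam a n x, 0 ≤ t :=
    ae_pos_dunklAppellMeasure.mono fun _ ht => ht.le
  have hsq := integrable_sub_sq_dunklAppellMeasure hμ hlam hA hpos hn hx
  rw [Dop_eq_integral hμ hlam hpos hx (integrable_of_holder hν0 hsq hα0 hα2 hf hx),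
    Dop_eq_integral hμ hlam hpos hx hsq]
  exact abs_integral_sub_le_of_holder hν0 hsq hM.le hα0 hα2 hf hx

theorem Dop_lipschitz_estimate (μ lam : ℝ) (hμ : 0 ≤ μ) (hlam : 0 ≤ lam)
    (a : ℕ → ℝ) (ha0 : a 0 ≠ 0) (hA : AnalyticHyp μ a) (hA1 : Afun μ a 1 ≠ 0)
    (hpos : ∀ r : ℕ, 0 ≤ a r / Afun μ a 1)
    (f : ℝ → ℝ) (M α : ℝ) (hM : 0 < M) (hα0 : 0 < α) (hα1 : α ≤ 1)
    (hf : ∀ x y : ℝ, 0 ≤ x → 0 ≤ y → |f x - f y| ≤ M * |x - y| ^ α)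
    (n : ℕ) (hn : 1 ≤ n) (x : ℝ) (hx : 0 ≤ x) :
    |Dop μ lam a n f x - f x| ≤
      M * (Dop μ lam a n (fun t => (t - x) ^ 2) x) ^ (α / 2) :=
  Dop_lipschitz_estimate_general μ lam hμ hlam a hA hA1 hpos f M α hM hα0 hα1 hf n hn x hx
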